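/- arXiv:1802.04994 — 2 statements merged into one kernel-verified Lean document; each statement's English description precedes it below -/
import Mathlib

section
/- Let A be a commutative nonassociative algebra over a field K of characteristic ≠ 2, let c_1, c_2, c_3 be idempotents of A, and suppose (c_1 − c_2)² = λ (c_1 − c_3)² for some λ ∈ K. Set u := c_2 − λ c_3 and v := (λ − 1) c_1 + u. Then c_1 u = (1/2)(1 − λ) c_1 + (1/2) u and c_1 v = (1/2) v; consequently, if v ≠ 0, then 1/2 is an eigenvalue of the multiplication operator L_{c_1}. -/
/-!
Expanding both squares with `cᵢ² = cᵢ` turns the hypothesis into the linear relation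
`2 c₁ (c₂ - λ c₃) = (1 - λ) c₁ + (c₂ - λ c₃)`. Halving it gives the formula for `c₁ u`, and adding
`(λ - 1) c₁` (on which `L_{c₁}` acts as the identity) to `u` cancels the `c₁`-component, leaving
an eigenvector `v` of `L_{c₁}` for `1/2`.
-/

section Bilinear

variable {K A : Type*} [CommRing K] [AddCommGroup A] [Module K A]
  (mul : A →ₗ[K] A →ₗ[K] A)

theorem mul_sub_self_of_idempotent (hcomm : ∀ x y : A, mul x y = mul y x) {a b : A}
    (ha : mul a a = a) (hb : mul b b = b) :
    mul (a - b) (a - b) = a + b - (2 : K) • mul a b := by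
  simp only [map_sub, LinearMap.sub_apply, ha, hb, hcomm b a]
  module

theorem two_smul_mul_eq_of_proportional_squares (hcomm : ∀ x y : A, mul x y = mul y x)
    {c₁ c₂ c₃ : A} (h₁ : mul c₁ c₁ = c₁) (h₂ : mul c₂ c₂ = c₂) (h₃ : mul c₃ c₃ = c₃) {lam : K}
    (hprop : mul (c₁ - c₂) (c₁ - c₂) = lam • mul (c₁ - c₃) (c₁ - c₃)) :
    (2 : K) • mul c₁ (c₂ - lam • c₃) = (1 - lam) • c₁ + (c₂ - lam • c₃) := by
  rw [mul_sub_self_of_idempotent mul hcomm h₁ h₂,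
    mul_sub_self_of_idempotent mul hcomm h₁ h₃] at hprop
  simp only [map_sub, map_smul]
  linear_combination (norm := module) -hprop

end Bilinear

theorem Module.End.apply_smul_add_eq_half_smul {K A : Type*} [Field K] [AddCommGroup A]
    [Module K A] (h2 : (2 : K) ≠ 0) (f : Module.End K A) {c u : A} (hc : f c = c) {lam : K}
    (hu : f u = ((1 - lam) / 2) • c + (1 / 2 : K) • u) :
    f ((lam - 1) • c + u) = (1 / 2 : K) • ((lam - 1) • c + u) := by
  rw [map_add, map_smul, hc, hu]
  match_scalars <;> field_simp; ring

/-- (From the proof of Proposition 3.5.) Let `c₁, c₂, c₃` be idempotents of a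
commutative nonassociative algebra over a field of characteristic ≠ 2 such that
`(c₁ - c₂)² = λ (c₁ - c₃)²`. With `u = c₂ - λ • c₃` and `v = (λ - 1) • c₁ + u` one
has `c₁ u = ((1 - λ)/2) c₁ + (1/2) u` and `c₁ v = (1/2) v`; hence if `v ≠ 0` then
`1/2` is an eigenvalue of `L_{c₁}`. -/
theorem half_in_spectrum_of_proportional_squares
    {K A : Type*} [Field K] [AddCommGroup A] [Module K A]
    (h2 : (2 : K) ≠ 0)
    (mul : A →ₗ[K] A →ₗ[K] A) (hcomm : ∀ x y : A, mul x y = mul y x)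
    (c₁ c₂ c₃ : A) (h₁ : mul c₁ c₁ = c₁) (h₂ : mul c₂ c₂ = c₂) (h₃ : mul c₃ c₃ = c₃)
    (lam : K) (hprop : mul (c₁ - c₂) (c₁ - c₂) = lam • mul (c₁ - c₃) (c₁ - c₃)) :
    mul c₁ (c₂ - lam • c₃)
        = ((1 - lam) / 2) • c₁ + (1 / 2 : K) • (c₂ - lam • c₃) ∧
      mul c₁ ((lam - 1) • c₁ + (c₂ - lam • c₃))
        = (1 / 2 : K) • ((lam - 1) • c₁ + (c₂ - lam • c₃)) ∧
      ((lam - 1) • c₁ + (c₂ - lam • c₃) ≠ 0 →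
        Module.End.HasEigenvalue (mul c₁) (1 / 2 : K)) := by
  have hu : mul c₁ (c₂ - lam • c₃) = ((1 - lam) / 2) • c₁ + (1 / 2 : K) • (c₂ - lam • c₃) := by
    rw [(eq_inv_smul_iff₀ h2).2
      (two_smul_mul_eq_of_proportional_squares mul hcomm h₁ h₂ h₃ hprop)]
    module
  have hv := Module.End.apply_smul_add_eq_half_smul h2 (mul c₁) h₁ hu
  exact ⟨hu, hv, fun hne =>
    Module.End.hasEigenvalue_of_hasEigenvector ⟨Module.End.mem_eigenspace_iff.2 hv, hne⟩⟩
end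

section
/- Let A be a 2-dimensional commutative nonassociative algebra over ℂ such that A has no nonzero 2-nilpotents and the set {c ∈ A : c² = c} consists of exactly four elements 0, c_1, c_2, c_3. For i = 1, 2, 3 let λ_i ∈ ℂ be such that the characteristic polynomial of the multiplication operator L_{c_i} is (t − 1)(t − λ_i), and assume λ_i ≠ 1/2 for each i. Then the idempotents satisfy the vector syzygy c_1/(2λ_1 − 1) + c_2/(2λ_2 − 1) + c_3/(2λ_3 − 1) = 0. -/
/-!
Two of the nonzero idempotents, `c₁` and `c₂`, form a basis of `A`; write `c₁c₂ = p c₁ + q c₂` and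
`c₃ = a c₁ + b c₂`. Since a line through a nonzero idempotent contains no idempotent other than
`0` and itself, `a, b ≠ 0`, and comparing coordinates in `c₃² = c₃` gives `a + 2bp = 1` and
`b + 2aq = 1`. Traces give `λ₁ = q`, `λ₂ = p`, and, as `L_{c₃} = a L_{c₁} + b L_{c₂}`,
`1 + λ₃ = a (1 + λ₁) + b (1 + λ₂)`. Together these say `a (2λ₁ - 1) = b (2λ₂ - 1) = -(2λ₃ - 1)`,
so the syzygy is `c₃ = a c₁ + b c₂` divided by `2λ₃ - 1`.
-/

open Polynomial

section CharpolyTrace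

variable {K V : Type*} [Field K] [AddCommGroup V] [Module K V] [FiniteDimensional K V]

theorem LinearMap.trace_eq_neg_charpoly_nextCoeff (f : V →ₗ[K] V) :
    LinearMap.trace K V f = -f.charpoly.nextCoeff := by
  let B := Module.finBasis K V
  rw [LinearMap.trace_eq_matrix_trace K B, Matrix.trace_eq_neg_charpoly_nextCoeff,
    LinearMap.charpoly_toMatrix]

theorem LinearMap.trace_eq_add_of_charpoly_eq {f : V →ₗ[K] V} {μ ν : K}
    (h : f.charpoly = (X - C μ) * (X - C ν)) : LinearMap.trace K V f = μ + ν := by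
  rw [f.trace_eq_neg_charpoly_nextCoeff, h,
    (monic_X_sub_C μ).nextCoeff_mul (monic_X_sub_C ν), nextCoeff_X_sub_C, nextCoeff_X_sub_C,
    neg_add, neg_neg, neg_neg]

end CharpolyTrace

section PairBasis

variable {K V : Type*} [Field K] [AddCommGroup V] [Module K V]

theorem LinearIndependent.exists_eq_smul_add_smul {x y : V} (hxy : LinearIndependent K ![x, y])
    (hV : Module.finrank K V = 2) (z : V) : ∃ a b : K, z = a • x + b • y := by
  have hspan := hxy.span_eq_top_of_card_eq_finrank (by simp [hV])
  rw [Matrix.range_cons_cons_empty] at hspan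
  obtain ⟨a, b, h⟩ := Submodule.mem_span_pair.mp (hspan ▸ Submodule.mem_top : z ∈ _)
  exact ⟨a, b, h.symm⟩

theorem LinearIndependent.trace_eq_of_apply_pair {x y : V} (hxy : LinearIndependent K ![x, y])
    (hV : Module.finrank K V = 2) {f : V →ₗ[K] V} {α β γ δ : K}
    (hx : f x = α • x + β • y) (hy : f y = γ • x + δ • y) :
    LinearMap.trace K V f = α + δ := by
  let B := basisOfLinearIndependentOfCardEqFinrank hxy (by simp [hV])
  have hB : ⇑B = ![x, y] := coe_basisOfLinearIndependentOfCardEqFinrank hxy _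
  have hx' : f (B 0) = α • B 0 + β • B 1 := by simpa [hB] using hx
  have hy' : f (B 1) = γ • B 0 + δ • B 1 := by simpa [hB] using hy
  rw [LinearMap.trace_eq_matrix_trace K B, Matrix.trace_fin_two, LinearMap.toMatrix_apply,
    LinearMap.toMatrix_apply, hx', hy']
  simp

theorem inv_smul_add_inv_smul_add_inv_smul_eq_zero (x y : V) {a b d₁ d₂ d₃ : K} (hd₃ : d₃ ≠ 0)
    (h₁ : a * d₁ = -d₃) (h₂ : b * d₂ = -d₃) :
    d₁⁻¹ • x + d₂⁻¹ • y + d₃⁻¹ • (a • x + b • y) = 0 := by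
  have inv_eq : ∀ {s d : K}, s * d = -d₃ → d⁻¹ = -s * d₃⁻¹ := by
    intro s d h
    have hd : d ≠ 0 := by
      rintro rfl
      exact hd₃ (neg_eq_zero.mp (by simpa using h.symm))
    field_simp
    linear_combination h
  rw [inv_eq h₁, inv_eq h₂]
  module

end PairBasis

section CommBilinear

variable {K A : Type*} [Field K] [AddCommGroup A] [Module K A] (mul : A →ₗ[K] A →ₗ[K] A)

theorem smul_eq_zero_or_eq_of_mul_self {y : A} (hy : mul y y = y) (t : K)
    (ht : mul (t • y) (t • y) = t • y) : t • y = 0 ∨ t • y = y := by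
  simp only [map_smul, LinearMap.smul_apply, hy, smul_smul] at ht
  rcases smul_eq_zero.mp (by rw [sub_smul, ht, sub_self] : (t * t - t) • y = 0) with h | h
  · rcases mul_eq_zero.mp (by linear_combination h : t * (t - 1) = 0) with h | h
    · simp [h]
    · simp [sub_eq_zero.mp h]
  · simp [h]

theorem linearIndependent_pair_of_mul_self {x y : A} (hx : mul x x = x) (hy : mul y y = y)
    (hx0 : x ≠ 0) (hy0 : y ≠ 0) (hxy : x ≠ y) : LinearIndependent K ![x, y] := by
  refine (LinearIndependent.pair_iff' hx0).mpr fun t ht => ?_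
  subst ht
  exact (smul_eq_zero_or_eq_of_mul_self mul hx t hy).elim hy0 fun h => hxy h.symm

variable {mul} (hcomm : ∀ x y : A, mul x y = mul y x)
include hcomm

theorem mul_self_smul_add_smul (x y : A) (a b : K) :
    mul (a • x + b • y) (a • x + b • y) =
      (a * a) • mul x x + (2 * a * b) • mul x y + (b * b) • mul y y := by
  simp only [map_add, map_smul, LinearMap.add_apply, LinearMap.smul_apply, hcomm y x]
  module

variable {x y : A} (hxy : LinearIndependent K ![x, y]) (hx : mul x x = x) (hy : mul y y = y)
  {p q : K} (hpq : mul x y = p • x + q • y)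
include hxy hx hy hpq

theorem add_two_mul_eq_one_of_mul_self {a b : K}
    (hz : mul (a • x + b • y) (a • x + b • y) = a • x + b • y)
    (hz0 : a • x + b • y ≠ 0) (hzx : a • x + b • y ≠ x) (hzy : a • x + b • y ≠ y) :
    a + 2 * b * p = 1 ∧ b + 2 * a * q = 1 := by
  have ha : a ≠ 0 := by
    rintro rfl
    simp only [zero_smul, zero_add] at hz hz0 hzy
    exact (smul_eq_zero_or_eq_of_mul_self mul hy b hz).elim hz0 hzy
  have hb : b ≠ 0 := by
    rintro rfl
    simp only [zero_smul, add_zero] at hz hz0 hzx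
    exact (smul_eq_zero_or_eq_of_mul_self mul hx a hz).elim hz0 hzx
  rw [mul_self_smul_add_smul hcomm, hx, hy, hpq] at hz
  obtain ⟨h₁, h₂⟩ := hxy.eq_of_pair (s := a * a + 2 * a * b * p) (t := b * b + 2 * a * b * q)
    (by rw [← hz]; module)
  exact ⟨mul_left_cancel₀ ha (by linear_combination h₁),
    mul_left_cancel₀ hb (by linear_combination h₂)⟩

theorem trace_mul_eq_of_mul_self (hA : Module.finrank K A = 2) :
    LinearMap.trace K A (mul x) = 1 + q ∧ LinearMap.trace K A (mul y) = p + 1 :=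
  ⟨hxy.trace_eq_of_apply_pair hA (α := 1) (β := 0) (by rw [hx]; module) hpq,
    hxy.trace_eq_of_apply_pair hA (hcomm y x ▸ hpq) (γ := 0) (δ := 1) (by rw [hy]; module)⟩

end CommBilinear

theorem vector_syzygy_dim_two_general
    {A : Type*} [AddCommGroup A] [Module ℂ A] [FiniteDimensional ℂ A]
    (hdim : Module.finrank ℂ A = 2)
    (mul : A →ₗ[ℂ] A →ₗ[ℂ] A) (hcomm : ∀ x y : A, mul x y = mul y x)
    (c₁ c₂ c₃ : A)
    (hc₁ : c₁ ≠ 0) (hc₂ : c₂ ≠ 0) (hc₃ : c₃ ≠ 0)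
    (h12 : c₁ ≠ c₂) (h13 : c₁ ≠ c₃) (h23 : c₂ ≠ c₃)
    (hidm : {c : A | mul c c = c} = {0, c₁, c₂, c₃})
    (lam₁ lam₂ lam₃ : ℂ)
    (hχ₁ : LinearMap.charpoly (mul c₁) = (X - 1) * (X - C lam₁))
    (hχ₂ : LinearMap.charpoly (mul c₂) = (X - 1) * (X - C lam₂))
    (hχ₃ : LinearMap.charpoly (mul c₃) = (X - 1) * (X - C lam₃))
    (hl₃ : lam₃ ≠ 1 / 2) :
    (2 * lam₁ - 1)⁻¹ • c₁ + (2 * lam₂ - 1)⁻¹ • c₂ + (2 * lam₃ - 1)⁻¹ • c₃ = 0 := by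
  have idem : ∀ c ∈ ({c₁, c₂, c₃} : Set A), mul c c = c := fun c hc =>
    (hidm ▸ Set.mem_insert_of_mem 0 hc : c ∈ {c : A | mul c c = c})
  have e₁ := idem c₁ (by simp)
  have e₂ := idem c₂ (by simp)
  have hli := linearIndependent_pair_of_mul_self mul e₁ e₂ hc₁ hc₂ h12
  obtain ⟨p, q, hpq⟩ := hli.exists_eq_smul_add_smul hdim (mul c₁ c₂)
  obtain ⟨a, b, rfl⟩ := hli.exists_eq_smul_add_smul hdim c₃
  obtain ⟨ha, hb⟩ := add_two_mul_eq_one_of_mul_self hcomm hli e₁ e₂ hpq (idem _ (by simp))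
    hc₃ h13.symm h23.symm
  have trace_eq : ∀ {c : A} {ν : ℂ}, (mul c).charpoly = (X - 1) * (X - C ν) →
      LinearMap.trace ℂ A (mul c) = 1 + ν :=
    fun h => LinearMap.trace_eq_add_of_charpoly_eq (by rwa [C_1])
  obtain ⟨t₁, t₂⟩ := trace_mul_eq_of_mul_self hcomm hli e₁ e₂ hpq hdim
  have t₃ := trace_eq hχ₃
  rw [trace_eq hχ₁] at t₁
  rw [trace_eq hχ₂] at t₂
  simp only [map_add, map_smul, smul_eq_mul, trace_eq hχ₁, trace_eq hχ₂]
    at t₃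
  refine inv_smul_add_inv_smul_add_inv_smul_eq_zero c₁ c₂
    (fun h => hl₃ (by linear_combination h / 2)) ?_ ?_
  · linear_combination -2 * t₃ + 4 * a * t₁ + 2 * b * t₂ + 2 * hb + ha
  · linear_combination -2 * t₃ + 2 * a * t₁ + 4 * b * t₂ + hb + 2 * ha

/-- Vector syzygy for two-dimensional generic algebras. Let `A` be a 2-dimensional
commutative nonassociative algebra over `ℂ` with no nonzero 2-nilpotents whose set of
idempotents consists of exactly the four elements `0, c₁, c₂, c₃`. If the
characteristic polynomial of `L_{cᵢ}` is `(t - 1)(t - λᵢ)` with `λᵢ ≠ 1/2`, then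
`c₁/(2λ₁ - 1) + c₂/(2λ₂ - 1) + c₃/(2λ₃ - 1) = 0`. -/
theorem vector_syzygy_dim_two
    {A : Type*} [AddCommGroup A] [Module ℂ A] [FiniteDimensional ℂ A]
    (hdim : Module.finrank ℂ A = 2)
    (mul : A →ₗ[ℂ] A →ₗ[ℂ] A) (hcomm : ∀ x y : A, mul x y = mul y x)
    (hnil : ∀ x : A, mul x x = 0 → x = 0)
    (c₁ c₂ c₃ : A)
    (hc₁ : c₁ ≠ 0) (hc₂ : c₂ ≠ 0) (hc₃ : c₃ ≠ 0)
    (h12 : c₁ ≠ c₂) (h13 : c₁ ≠ c₃) (h23 : c₂ ≠ c₃)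
    (hidm : {c : A | mul c c = c} = {0, c₁, c₂, c₃})
    (lam₁ lam₂ lam₃ : ℂ)
    (hχ₁ : LinearMap.charpoly (mul c₁) = (X - 1) * (X - C lam₁))
    (hχ₂ : LinearMap.charpoly (mul c₂) = (X - 1) * (X - C lam₂))
    (hχ₃ : LinearMap.charpoly (mul c₃) = (X - 1) * (X - C lam₃))
    (hl₁ : lam₁ ≠ 1 / 2) (hl₂ : lam₂ ≠ 1 / 2) (hl₃ : lam₃ ≠ 1 / 2) :
    (2 * lam₁ - 1)⁻¹ • c₁ + (2 * lam₂ - 1)⁻¹ • c₂ + (2 * lam₃ - 1)⁻¹ • c₃ = 0 :=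
  vector_syzygy_dim_two_general hdim mul hcomm c₁ c₂ c₃ hc₁ hc₂ hc₃ h12 h13 h23 hidm lam₁ lam₂ lam₃
    hχ₁ hχ₂ hχ₃ hl₃
end
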